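/- Let y ∈ ℝ^N, let K and K̃ be N×N real symmetric positive semidefinite matrices, let σ > 0, and let α, α̃ ∈ ℝ^N be the unique solutions of (K + σ²I)α = y and (K̃ + σ²I)α̃ = y. Let k_x, k̃_x ∈ ℝ^N be any two vectors, and set μ(x) = k_xᵀ α and μ̃(x) = k̃_xᵀ α̃. Then |μ̃(x) − μ(x)| ≤ ( (‖k_x‖/σ⁴) ‖K̃ − K‖ + ‖k̃_x − k_x‖/σ² ) · ‖y‖, where ‖·‖ denotes the Euclidean norm for vectors and the operator (spectral) norm for matrices. -/

import Mathlib

/-!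
With `A = K + σ² I`, positive semidefiniteness gives `σ² ‖u‖² ≤ uᵀ A u ≤ ‖u‖ ‖A u‖`, so
`‖A⁻¹‖ ≤ 1/σ²`; hence `‖α‖, ‖α̃‖ ≤ ‖y‖/σ²`. The difference `α̃ - α` solves
`(K̃ + σ² I)(α̃ - α) = (K - K̃) α`, so `‖α̃ - α‖ ≤ ‖K̃ - K‖ ‖y‖/σ⁴`. Finally
`k̃ᵀα̃ - kᵀα = kᵀ(α̃ - α) + (k̃ - k)ᵀα̃` and Cauchy–Schwarz.
-/

/-- Operator (spectral) norm of a real square matrix, induced by the Euclidean norm. -/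
noncomputable def opNorm {N : ℕ} (A : Matrix (Fin N) (Fin N) ℝ) : ℝ :=
  ‖Matrix.toEuclideanCLM (𝕜 := ℝ) A‖

/-- Euclidean norm of a vector in `ℝ^N`. -/
noncomputable def vecNorm {N : ℕ} (v : Fin N → ℝ) : ℝ :=
  Real.sqrt (∑ i, v i ^ 2)

open Matrix

lemma vecNorm_nonneg {N : ℕ} (v : Fin N → ℝ) : 0 ≤ vecNorm v :=
  Real.sqrt_nonneg _

lemma opNorm_nonneg {N : ℕ} (A : Matrix (Fin N) (Fin N) ℝ) : 0 ≤ opNorm A :=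
  norm_nonneg _

lemma vecNorm_eq_norm_toLp {N : ℕ} (v : Fin N → ℝ) : vecNorm v = ‖WithLp.toLp 2 v‖ := by
  simp [EuclideanSpace.norm_eq, vecNorm]

lemma vecNorm_sq {N : ℕ} (v : Fin N → ℝ) : vecNorm v ^ 2 = v ⬝ᵥ v := by
  rw [vecNorm, Real.sq_sqrt (by positivity)]
  simp [dotProduct, sq]

lemma abs_dotProduct_le {N : ℕ} (u v : Fin N → ℝ) : |u ⬝ᵥ v| ≤ vecNorm u * vecNorm v := by
  simpa [vecNorm_eq_norm_toLp, EuclideanSpace.inner_toLp_toLp, dotProduct_comm] using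
    abs_real_inner_le_norm (WithLp.toLp 2 u) (WithLp.toLp 2 v)

lemma vecNorm_mulVec_le {N : ℕ} (A : Matrix (Fin N) (Fin N) ℝ) (v : Fin N → ℝ) :
    vecNorm (A *ᵥ v) ≤ opNorm A * vecNorm v := by
  simpa [vecNorm_eq_norm_toLp, opNorm] using
    (Matrix.toEuclideanCLM (𝕜 := ℝ) A).le_opNorm (WithLp.toLp 2 v)

lemma opNorm_sub_comm {N : ℕ} (A B : Matrix (Fin N) (Fin N) ℝ) :
    opNorm (A - B) = opNorm (B - A) := by
  rw [opNorm, opNorm, ← neg_sub, map_neg, norm_neg]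

lemma abs_dotProduct_sub_dotProduct_le {N : ℕ} (u u' v v' : Fin N → ℝ) :
    |u' ⬝ᵥ v' - u ⬝ᵥ v| ≤ vecNorm u * vecNorm (v' - v) + vecNorm (u' - u) * vecNorm v' := by
  have hsplit : u' ⬝ᵥ v' - u ⬝ᵥ v = u ⬝ᵥ (v' - v) + (u' - u) ⬝ᵥ v' := by
    simp only [dotProduct_sub, sub_dotProduct]
    ring
  rw [hsplit]
  exact (abs_add_le _ _).trans (add_le_add (abs_dotProduct_le _ _) (abs_dotProduct_le _ _))

lemma Matrix.PosSemidef.mul_vecNorm_le_vecNorm_add_smul_one_mulVec {N : ℕ}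
    {K : Matrix (Fin N) (Fin N) ℝ} (hK : K.PosSemidef) (c : ℝ) (u : Fin N → ℝ) :
    c * vecNorm u ≤ vecNorm ((K + c • 1) *ᵥ u) := by
  have hquad : c * vecNorm u ^ 2 ≤ u ⬝ᵥ (K + c • 1) *ᵥ u := by
    have hKu := hK.dotProduct_mulVec_nonneg u
    rw [star_trivial] at hKu
    rw [add_mulVec, dotProduct_add, smul_mulVec, one_mulVec, dotProduct_smul, vecNorm_sq,
      smul_eq_mul]
    linarith
  have hcs := (le_abs_self _).trans (abs_dotProduct_le u ((K + c • 1) *ᵥ u))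
  rcases (vecNorm_nonneg u).eq_or_lt with hzero | hpos
  · rw [← hzero, mul_zero]
    exact vecNorm_nonneg _
  · refine le_of_mul_le_mul_left ?_ hpos
    nlinarith

lemma Matrix.PosSemidef.vecNorm_le_of_add_smul_one_mulVec_eq {N : ℕ}
    {K : Matrix (Fin N) (Fin N) ℝ} (hK : K.PosSemidef) {c : ℝ} (hc : 0 < c)
    {u v : Fin N → ℝ} (h : (K + c • 1) *ᵥ u = v) :
    vecNorm u ≤ vecNorm v / c := by
  rw [le_div_iff₀ hc, mul_comm, ← h]
  exact hK.mul_vecNorm_le_vecNorm_add_smul_one_mulVec c u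

lemma vecNorm_sub_le_of_add_smul_one_mulVec_eq {N : ℕ} {K Kt : Matrix (Fin N) (Fin N) ℝ}
    (hKt : Kt.PosSemidef) {c : ℝ} (hc : 0 < c) {α αt y : Fin N → ℝ}
    (hα : (K + c • 1) *ᵥ α = y) (hαt : (Kt + c • 1) *ᵥ αt = y) :
    vecNorm (αt - α) ≤ opNorm (Kt - K) * vecNorm α / c := by
  have hdiff : (Kt + c • 1) *ᵥ (αt - α) = (K - Kt) *ᵥ α := by
    rw [mulVec_sub, hαt, ← hα, ← sub_mulVec]
    congr 1
    abel
  calc vecNorm (αt - α) ≤ vecNorm ((K - Kt) *ᵥ α) / c :=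
        hKt.vecNorm_le_of_add_smul_one_mulVec_eq hc hdiff
    _ ≤ opNorm (Kt - K) * vecNorm α / c := by
        rw [← opNorm_sub_comm]
        gcongr
        exact vecNorm_mulVec_le _ _

theorem stmt_11 (N : ℕ) (y : Fin N → ℝ) (K Ktil : Matrix (Fin N) (Fin N) ℝ)
    (hK : K.PosSemidef) (hKt : Ktil.PosSemidef) (σ : ℝ) (hσ : 0 < σ)
    (α αt : Fin N → ℝ)
    (hα : (K + σ ^ 2 • 1).mulVec α = y) (hαt : (Ktil + σ ^ 2 • 1).mulVec αt = y)
    (kx ktx : Fin N → ℝ) :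
    |dotProduct ktx αt - dotProduct kx α|
      ≤ (vecNorm kx / σ ^ 4 * opNorm (Ktil - K) + vecNorm (ktx - kx) / σ ^ 2) * vecNorm y := by
  have hσ2 : 0 < σ ^ 2 := by positivity
  have hα_le := hK.vecNorm_le_of_add_smul_one_mulVec_eq hσ2 hα
  have hαt_le := hKt.vecNorm_le_of_add_smul_one_mulVec_eq hσ2 hαt
  have hdiff_le := vecNorm_sub_le_of_add_smul_one_mulVec_eq hKt hσ2 hα hαt
  have hkx := vecNorm_nonneg kx
  have hdk := vecNorm_nonneg (ktx - kx)
  have hop := opNorm_nonneg (Ktil - K)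
  calc |ktx ⬝ᵥ αt - kx ⬝ᵥ α|
      ≤ vecNorm kx * vecNorm (αt - α) + vecNorm (ktx - kx) * vecNorm αt :=
        abs_dotProduct_sub_dotProduct_le kx ktx α αt
    _ ≤ vecNorm kx * (opNorm (Ktil - K) * (vecNorm y / σ ^ 2) / σ ^ 2)
          + vecNorm (ktx - kx) * (vecNorm y / σ ^ 2) := by
        gcongr
        exact hdiff_le.trans (by gcongr)
    _ = (vecNorm kx / σ ^ 4 * opNorm (Ktil - K) + vecNorm (ktx - kx) / σ ^ 2) * vecNorm y := by
        field_simp
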